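/- arXiv:1210.4792 — 3 statements merged into one kernel-verified Lean document; each statement's English description precedes it below -/
import Mathlib

section
/- For a vector of nonnegative reals α_1,…,α_m and p ∈ [1,2] with q = p/(2−p), the minimum value of ∑_j α_j²/η_j over {η : η_j > 0, ∑_j η_j^q ≤ 1} equals (∑_j α_j^{2q/(q+1)})^{(q+1)/q} = ‖α‖²_{2q/(q+1)}, recovering the squared l_p-type norm. -/
/-!
Write `r = 2q/(q+1)`. Hölder's inequality with exponents `(q+1)/q` and `q+1`, applied to
`α_j^r = (α_j²/η_j)^(q/(q+1)) · η_j^(q/(q+1))`, gives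
`∑ α_j^r ≤ (∑ α_j²/η_j)^(q/(q+1)) (∑ η_j^q)^(1/(q+1))`, so the objective is at least
`(∑ α_j^r)^((q+1)/q)` whenever `∑ η_j^q ≤ 1`. Equality holds for `η_j ∝ α_j^(2/(q+1))`,
normalised so that `∑ η_j^q = 1`.
-/

open Finset

namespace VariationalLpNorm

variable {ι : Type*} [Fintype ι] {q : ℝ}

theorem holderConjugate_add_one_div_self (hq : 0 < q) :
    Real.HolderConjugate ((q + 1) / q) (q + 1) := by
  rw [Real.holderConjugate_iff, lt_div_iff₀ hq, inv_div]
  exact ⟨by linarith, by field_simp⟩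

theorem div_add_one_mul_add_one_div (hq : 0 < q) : q / (q + 1) * ((q + 1) / q) = 1 := by
  field_simp

theorem sum_rpow_le_sum_sq_div_rpow_mul (hq : 0 < q) {α η : ι → ℝ} (hα : ∀ j, 0 ≤ α j)
    (hη : ∀ j, 0 < η j) :
    ∑ j, α j ^ (2 * q / (q + 1)) ≤
      (∑ j, α j ^ 2 / η j) ^ (q / (q + 1)) * (∑ j, η j ^ q) ^ (1 / (q + 1)) := by
  have hobj : ∀ j, 0 ≤ α j ^ 2 / η j := fun j => div_nonneg (sq_nonneg _) (hη j).le
  have hprod : ∀ j, (α j ^ 2 / η j) ^ (q / (q + 1)) * η j ^ (q / (q + 1)) =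
      α j ^ (2 * q / (q + 1)) := fun j => by
    rw [← Real.mul_rpow (hobj j) (hη j).le, div_mul_cancel₀ _ (hη j).ne', ← Real.rpow_natCast,
      ← Real.rpow_mul (hα j), mul_div_assoc, Nat.cast_ofNat]
  have hf : ∀ j, ((α j ^ 2 / η j) ^ (q / (q + 1))) ^ ((q + 1) / q) = α j ^ 2 / η j := fun j => by
    rw [← Real.rpow_mul (hobj j), div_add_one_mul_add_one_div hq, Real.rpow_one]
  have hg : ∀ j, (η j ^ (q / (q + 1))) ^ (q + 1) = η j ^ q := fun j => by
    rw [← Real.rpow_mul (hη j).le, div_mul_cancel₀ _ (by positivity)]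
  have := Real.inner_le_Lp_mul_Lq_of_nonneg univ (holderConjugate_add_one_div_self hq)
    (f := fun j => (α j ^ 2 / η j) ^ (q / (q + 1))) (g := fun j => η j ^ (q / (q + 1)))
    (fun j _ => Real.rpow_nonneg (hobj j) _) (fun j _ => Real.rpow_nonneg (hη j).le _)
  simpa only [hprod, hf, hg, one_div_div] using this

theorem rpow_sum_rpow_le_sum_sq_div (hq : 0 < q) {α η : ι → ℝ} (hα : ∀ j, 0 ≤ α j)
    (hη : ∀ j, 0 < η j) (hηq : ∑ j, η j ^ q ≤ 1) :
    (∑ j, α j ^ (2 * q / (q + 1))) ^ ((q + 1) / q) ≤ ∑ j, α j ^ 2 / η j := by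
  have hobj : 0 ≤ ∑ j, α j ^ 2 / η j := sum_nonneg fun j _ => div_nonneg (sq_nonneg _) (hη j).le
  have hholder : ∑ j, α j ^ (2 * q / (q + 1)) ≤ (∑ j, α j ^ 2 / η j) ^ (q / (q + 1)) :=
    calc ∑ j, α j ^ (2 * q / (q + 1))
        ≤ (∑ j, α j ^ 2 / η j) ^ (q / (q + 1)) * (∑ j, η j ^ q) ^ (1 / (q + 1)) :=
          sum_rpow_le_sum_sq_div_rpow_mul hq hα hη
      _ ≤ (∑ j, α j ^ 2 / η j) ^ (q / (q + 1)) * 1 := by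
          gcongr
          exact Real.rpow_le_one (sum_nonneg fun j _ => Real.rpow_nonneg (hη j).le _) hηq
            (by positivity)
      _ = _ := mul_one _
  calc (∑ j, α j ^ (2 * q / (q + 1))) ^ ((q + 1) / q)
      ≤ ((∑ j, α j ^ 2 / η j) ^ (q / (q + 1))) ^ ((q + 1) / q) := by
        gcongr
        exact sum_nonneg fun j _ => Real.rpow_nonneg (hα j) _
    _ = ∑ j, α j ^ 2 / η j := by
        rw [← Real.rpow_mul hobj, div_add_one_mul_add_one_div hq, Real.rpow_one]

noncomputable def optimalWeight (q : ℝ) (α : ι → ℝ) (j : ι) : ℝ :=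
  α j ^ (2 / (q + 1)) / (∑ i, α i ^ (2 * q / (q + 1))) ^ q⁻¹

theorem optimalWeight_pos {α : ι → ℝ} (hα : ∀ j, 0 < α j) (j : ι) :
    0 < optimalWeight q α j := by
  have hT : 0 < ∑ i, α i ^ (2 * q / (q + 1)) :=
    (Real.rpow_pos_of_pos (hα j) _).trans_le
      (single_le_sum (fun i _ => Real.rpow_nonneg (hα i).le _) (mem_univ j))
  exact div_pos (Real.rpow_pos_of_pos (hα j) _) (Real.rpow_pos_of_pos hT _)

theorem sum_optimalWeight_rpow_le_one (hq : q ≠ 0) {α : ι → ℝ} (hα : ∀ j, 0 ≤ α j) :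
    ∑ j, optimalWeight q α j ^ q ≤ 1 := by
  set T := ∑ i, α i ^ (2 * q / (q + 1))
  have hT : 0 ≤ T := sum_nonneg fun i _ => Real.rpow_nonneg (hα i) _
  have hterm : ∀ j, optimalWeight q α j ^ q = α j ^ (2 * q / (q + 1)) / T := fun j => by
    rw [optimalWeight, Real.div_rpow (Real.rpow_nonneg (hα j) _) (Real.rpow_nonneg hT _),
      Real.rpow_inv_rpow hT hq, ← Real.rpow_mul (hα j), div_mul_eq_mul_div, mul_comm 2 q]
  -- `T / T` is `1`, or `0` in the degenerate case `T = 0`.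
  simpa only [hterm, ← sum_div] using div_self_le_one T

theorem sum_sq_div_optimalWeight (hq : 0 < q) {α : ι → ℝ} (hα : ∀ j, 0 < α j) :
    ∑ j, α j ^ 2 / optimalWeight q α j = (∑ j, α j ^ (2 * q / (q + 1))) ^ ((q + 1) / q) := by
  set T := ∑ i, α i ^ (2 * q / (q + 1))
  have hT : 0 ≤ T := sum_nonneg fun i _ => Real.rpow_nonneg (hα i).le _
  have hterm : ∀ j, α j ^ 2 / optimalWeight q α j = α j ^ (2 * q / (q + 1)) * T ^ q⁻¹ :=
    fun j => by
      have hexp : (2 : ℝ) - 2 / (q + 1) = 2 * q / (q + 1) := by field_simp; ring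
      rw [optimalWeight, div_div_eq_mul_div, mul_div_right_comm, ← Real.rpow_natCast,
        ← Real.rpow_sub (hα j), Nat.cast_ofNat, hexp]
  have hexp : (q + 1) / q = 1 + q⁻¹ := by field_simp
  rw [sum_congr rfl fun j _ => hterm j, ← sum_mul, hexp, Real.rpow_add' hT (by positivity),
    Real.rpow_one]

theorem isLeast_sum_sq_div (hq : 0 < q) {α : ι → ℝ} (hα : ∀ j, 0 < α j) :
    IsLeast
      {s : ℝ | ∃ η : ι → ℝ, (∀ j, 0 < η j) ∧ (∑ j, η j ^ q) ≤ 1 ∧ s = ∑ j, α j ^ 2 / η j}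
      ((∑ j, α j ^ (2 * q / (q + 1))) ^ ((q + 1) / q)) := by
  refine ⟨⟨optimalWeight q α, optimalWeight_pos hα,
    sum_optimalWeight_rpow_le_one hq.ne' fun j => (hα j).le,
    (sum_sq_div_optimalWeight hq hα).symm⟩, ?_⟩
  rintro s ⟨η, hη, hηq, rfl⟩
  exact rpow_sum_rpow_le_sum_sq_div hq (fun j => (hα j).le) hη hηq

end VariationalLpNorm

theorem variational_lp_norm {m : ℕ} (α : Fin m → ℝ) (hα : ∀ j, 0 < α j)
    (p q : ℝ) (hp1 : 1 ≤ p) (hp2 : p < 2) (hq : q = p / (2 - p)) :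
    IsLeast
      {s : ℝ | ∃ η : Fin m → ℝ, (∀ j, 0 < η j) ∧ (∑ j, η j ^ q) ≤ 1 ∧
        s = ∑ j, α j ^ 2 / η j}
      ((∑ j, α j ^ (2 * q / (q + 1))) ^ ((q + 1) / q)) := by
  have hq_pos : 0 < q := hq ▸ div_pos (by linarith) (by linarith)
  exact VariationalLpNorm.isLeast_sum_sq_div hq_pos hα
end

section
/- Let H_λ^p be the class of ℝ^n-valued functions f = ∑_{j=1}^m f_j with f_j in vector-valued RKHS H_{k⃗_j} and ‖f‖_{H(l_p)} ≤ λ. Then for any 1 ≤ p ≤ ∞ and sample x_1,…,x_l, the empirical Rademacher complexity satisfies R̂_l(H_λ^p) ≤ (λ/l)·∑_{j=1}^m √(tr(K⃗_j)), where K⃗_j is the nl×nl block Gram matrix of kernel k⃗_j on the sample. -/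
open scoped BigOperators RealInnerProductSpace

/-- Sign vector associated with a boolean assignment. -/
def radSign (b : Bool) : ℝ := if b then 1 else -1

lemma radSign_mul_self (b : Bool) : radSign b * radSign b = 1 := by
  cases b <;> norm_num [radSign]

lemma sum_radSign_mul {I : Type*} [Fintype I] [DecidableEq I] (t t' : I) :
    ∑ σ : I → Bool, radSign (σ t) * radSign (σ t')
      = if t = t' then (Fintype.card (I → Bool) : ℝ) else 0 := by
  split_ifs with h
  · subst h
    simp [radSign_mul_self, Finset.card_univ]
  · set e : (I → Bool) → (I → Bool) := fun σ => Function.update σ t (!σ t) with he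
    have hinv : Function.Involutive e := by
      intro σ; funext s
      by_cases hs : s = t
      · subst hs; simp [he]
      · simp [he, Function.update_of_ne hs]
    have key : ∀ σ : I → Bool,
        -(radSign (σ t) * radSign (σ t'))
          = radSign ((e σ) t) * radSign ((e σ) t') := by
      intro σ
      rw [he]
      simp only [Function.update_self, Function.update_of_ne (Ne.symm h)]
      cases σ t <;> cases σ t' <;> simp [radSign]
    have hsum := Fintype.sum_bijective e hinv.bijective
      (fun σ => -(radSign (σ t) * radSign (σ t')))
      (fun σ => radSign (σ t) * radSign (σ t')) key
    have hneg : ∑ σ : I → Bool, -(radSign (σ t) * radSign (σ t'))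
        = -∑ σ : I → Bool, radSign (σ t) * radSign (σ t') := by
      rw [Finset.sum_neg_distrib]
    linarith [hsum, hneg.symm ▸ hsum]

theorem rademacher_bound_general_dictionary
    {X : Type*} {n m l : ℕ} (hl : 0 < l)
    -- each `H j` is a (vector-valued) RKHS, presented via its kernel sections
    (H : Fin m → Type) [∀ j, NormedAddCommGroup (H j)] [∀ j, InnerProductSpace ℝ (H j)]
    (Ksec : ∀ j, X → Fin n → H j)
    -- the matrix-valued kernels, with the reproducing property k⃗ⱼ(x,z)_{ab} = ⟪Kⱼ(x)a, Kⱼ(z)b⟫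
    (kvec : Fin m → X → X → Matrix (Fin n) (Fin n) ℝ)
    (hker : ∀ j x z a b, kvec j x z a b = ⟪Ksec j x a, Ksec j z b⟫)
    (p : ℝ) (hp : 1 ≤ p) (lam : ℝ) (hlam : 0 ≤ lam)
    -- the sample
    (x : Fin l → X) :
    -- empirical Rademacher complexity of the class H_λ^p
    (1 / (l : ℝ)) * ((1 / (2 ^ (n * l) : ℝ)) *
      ∑ σ : Fin l × Fin n → Bool,
        sSup {s : ℝ | ∃ h : ∀ j, H j,
          ((∑ j, ‖h j‖ ^ p) ^ (1 / p)) ≤ lam ∧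
          s = ∑ i, ∑ a, radSign (σ (i, a)) * (∑ j, ⟪Ksec j (x i) a, h j⟫)})
    ≤ (lam / l) * ∑ j, Real.sqrt (∑ i, ∑ a, kvec j (x i) (x i) a a) := by
  classical
  have hp0 : (0:ℝ) < p := lt_of_lt_of_le one_pos hp
  set g : (Fin l × Fin n → Bool) → ∀ j, H j :=
    fun σ j => ∑ t : Fin l × Fin n, radSign (σ t) • Ksec j (x t.1) t.2 with hg
  -- Step 1: bound the sup for each σ
  have hsup : ∀ σ : Fin l × Fin n → Bool,
      sSup {s : ℝ | ∃ h : ∀ j, H j,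
          ((∑ j, ‖h j‖ ^ p) ^ (1 / p)) ≤ lam ∧
          s = ∑ i, ∑ a, radSign (σ (i, a)) * (∑ j, ⟪Ksec j (x i) a, h j⟫)}
        ≤ lam * ∑ j, ‖g σ j‖ := by
    intro σ
    apply Real.sSup_le
    · rintro s ⟨h, hh, rfl⟩
      have hnorm : ∀ j, ‖h j‖ ≤ lam := by
        intro j
        have h1 : ‖h j‖ ^ p ≤ ∑ j', ‖h j'‖ ^ p :=
          Finset.single_le_sum (fun j' _ => Real.rpow_nonneg (norm_nonneg _) p)
            (Finset.mem_univ j)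
        have h2 : (‖h j‖ ^ p) ^ (1/p) ≤ lam :=
          le_trans (Real.rpow_le_rpow (Real.rpow_nonneg (norm_nonneg _) p) h1
            (by positivity)) hh
        rwa [← Real.rpow_mul (norm_nonneg _), mul_one_div_cancel (ne_of_gt hp0),
          Real.rpow_one] at h2
      have hinner : ∀ j, ⟪g σ j, h j⟫
          = ∑ i, ∑ a, radSign (σ (i,a)) * ⟪Ksec j (x i) a, h j⟫ := by
        intro j
        rw [hg]
        simp only
        rw [sum_inner, Fintype.sum_prod_type]
        simp [real_inner_smul_left]
      have hrw : (∑ i, ∑ a, radSign (σ (i,a)) * ∑ j, ⟪Ksec j (x i) a, h j⟫)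
          = ∑ j, ⟪g σ j, h j⟫ := by
        calc (∑ i, ∑ a, radSign (σ (i,a)) * ∑ j, ⟪Ksec j (x i) a, h j⟫)
            = ∑ i, ∑ a, ∑ j, radSign (σ (i,a)) * ⟪Ksec j (x i) a, h j⟫ := by
              simp [Finset.mul_sum]
          _ = ∑ i, ∑ j, ∑ a, radSign (σ (i,a)) * ⟪Ksec j (x i) a, h j⟫ :=
              Finset.sum_congr rfl fun i _ => Finset.sum_comm
          _ = ∑ j, ∑ i, ∑ a, radSign (σ (i,a)) * ⟪Ksec j (x i) a, h j⟫ :=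
              Finset.sum_comm
          _ = ∑ j, ⟪g σ j, h j⟫ := by
              exact Finset.sum_congr rfl fun j _ => (hinner j).symm
      rw [hrw]
      calc (∑ j, ⟪g σ j, h j⟫) ≤ ∑ j, ‖g σ j‖ * ‖h j‖ :=
            Finset.sum_le_sum fun j _ => real_inner_le_norm _ _
        _ ≤ ∑ j, ‖g σ j‖ * lam :=
            Finset.sum_le_sum fun j _ =>
              mul_le_mul_of_nonneg_left (hnorm j) (norm_nonneg _)
        _ = lam * ∑ j, ‖g σ j‖ := by rw [← Finset.sum_mul]; ring
    · positivity
  -- Step 2: per-j expected-norm bound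
  have hEg : ∀ j, (∑ σ : Fin l × Fin n → Bool, ‖g σ j‖)
      ≤ (2:ℝ)^(n*l) * Real.sqrt (∑ i, ∑ a, kvec j (x i) (x i) a a) := by
    intro j
    set N : ℕ := Fintype.card (Fin l × Fin n → Bool) with hNdef
    have hN : (N:ℝ) = (2:ℝ) ^ (n * l) := by
      rw [hNdef, Fintype.card_fun]
      push_cast
      simp [mul_comm]
    have hT : (∑ i, ∑ a, kvec j (x i) (x i) a a)
        = ∑ t : Fin l × Fin n, ‖Ksec j (x t.1) t.2‖^2 := by
      rw [Fintype.sum_prod_type]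
      simp [hker, real_inner_self_eq_norm_sq]
    set T : ℝ := ∑ t : Fin l × Fin n, ‖Ksec j (x t.1) t.2‖^2 with hTdef
    have hTnn : 0 ≤ T := Finset.sum_nonneg fun _ _ => sq_nonneg _
    have hsq : ∑ σ : Fin l × Fin n → Bool, ‖g σ j‖^2 = (N:ℝ) * T := by
      have hexp : ∀ σ : Fin l × Fin n → Bool, ‖g σ j‖^2
          = ∑ t : Fin l × Fin n, ∑ t' : Fin l × Fin n,
              (radSign (σ t) * radSign (σ t'))
                * ⟪Ksec j (x t.1) t.2, Ksec j (x t'.1) t'.2⟫ := by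
        intro σ
        rw [← real_inner_self_eq_norm_sq, hg]
        simp only
        rw [sum_inner]
        refine Finset.sum_congr rfl fun t _ => ?_
        rw [inner_sum]
        refine Finset.sum_congr rfl fun t' _ => ?_
        rw [real_inner_smul_left, real_inner_smul_right]; ring
      calc (∑ σ : Fin l × Fin n → Bool, ‖g σ j‖^2)
          = ∑ σ : Fin l × Fin n → Bool, ∑ t : Fin l × Fin n, ∑ t' : Fin l × Fin n,
              (radSign (σ t) * radSign (σ t'))
                * ⟪Ksec j (x t.1) t.2, Ksec j (x t'.1) t'.2⟫ :=
            Finset.sum_congr rfl fun σ _ => hexp σ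
        _ = ∑ t : Fin l × Fin n, ∑ t' : Fin l × Fin n,
              (∑ σ : Fin l × Fin n → Bool, radSign (σ t) * radSign (σ t'))
                * ⟪Ksec j (x t.1) t.2, Ksec j (x t'.1) t'.2⟫ := by
            rw [Finset.sum_comm]
            refine Finset.sum_congr rfl fun t _ => ?_
            rw [Finset.sum_comm]
            refine Finset.sum_congr rfl fun t' _ => ?_
            rw [Finset.sum_mul]
        _ = ∑ t : Fin l × Fin n, (N:ℝ) * ‖Ksec j (x t.1) t.2‖^2 := by
            refine Finset.sum_congr rfl fun t _ => ?_
            rw [Finset.sum_eq_single t]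
            · rw [sum_radSign_mul, if_pos rfl, real_inner_self_eq_norm_sq]
            · intro t' _ ht'
              rw [sum_radSign_mul, if_neg (Ne.symm ht'), zero_mul]
            · intro habs; exact absurd (Finset.mem_univ t) habs
        _ = (N:ℝ) * T := by rw [← Finset.mul_sum]
    have hS0 : 0 ≤ ∑ σ : Fin l × Fin n → Bool, ‖g σ j‖ :=
      Finset.sum_nonneg fun _ _ => norm_nonneg _
    have hS1 : (∑ σ : Fin l × Fin n → Bool, ‖g σ j‖)^2 ≤ (N:ℝ)^2 * T := by
      calc (∑ σ : Fin l × Fin n → Bool, ‖g σ j‖)^2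
          ≤ (N:ℝ) * ∑ σ : Fin l × Fin n → Bool, ‖g σ j‖^2 := by
            simpa [hNdef, Finset.card_univ] using
              sq_sum_le_card_mul_sum_sq (s := (Finset.univ : Finset (Fin l × Fin n → Bool)))
                (f := fun σ => ‖g σ j‖)
        _ = (N:ℝ)^2 * T := by rw [hsq]; ring
    have hfinal : (∑ σ : Fin l × Fin n → Bool, ‖g σ j‖) ≤ (N:ℝ) * Real.sqrt T := by
      rw [← Real.sqrt_sq hS0]
      have h1 : Real.sqrt ((∑ σ : Fin l × Fin n → Bool, ‖g σ j‖)^2)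
          ≤ Real.sqrt ((N:ℝ)^2 * T) := Real.sqrt_le_sqrt hS1
      have h2 : Real.sqrt ((N:ℝ)^2 * T) = (N:ℝ) * Real.sqrt T := by
        rw [Real.sqrt_mul (by positivity), Real.sqrt_sq (by positivity)]
      rwa [h2] at h1
    rw [hT, ← hN]
    exact hfinal
  -- Combine
  have hmain : (∑ σ : Fin l × Fin n → Bool,
      sSup {s : ℝ | ∃ h : ∀ j, H j,
          ((∑ j, ‖h j‖ ^ p) ^ (1 / p)) ≤ lam ∧
          s = ∑ i, ∑ a, radSign (σ (i, a)) * (∑ j, ⟪Ksec j (x i) a, h j⟫)})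
      ≤ lam * ((2:ℝ)^(n*l) * ∑ j, Real.sqrt (∑ i, ∑ a, kvec j (x i) (x i) a a)) := by
    calc (∑ σ : Fin l × Fin n → Bool,
        sSup {s : ℝ | ∃ h : ∀ j, H j,
            ((∑ j, ‖h j‖ ^ p) ^ (1 / p)) ≤ lam ∧
            s = ∑ i, ∑ a, radSign (σ (i, a)) * (∑ j, ⟪Ksec j (x i) a, h j⟫)})
        ≤ ∑ σ : Fin l × Fin n → Bool, lam * ∑ j, ‖g σ j‖ :=
          Finset.sum_le_sum fun σ _ => hsup σ
      _ = lam * ∑ j, ∑ σ : Fin l × Fin n → Bool, ‖g σ j‖ := by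
          rw [← Finset.mul_sum, Finset.sum_comm]
      _ ≤ lam * ∑ j, (2:ℝ)^(n*l) * Real.sqrt (∑ i, ∑ a, kvec j (x i) (x i) a a) := by
          apply mul_le_mul_of_nonneg_left _ hlam
          exact Finset.sum_le_sum fun j _ => hEg j
      _ = lam * ((2:ℝ)^(n*l) * ∑ j, Real.sqrt (∑ i, ∑ a, kvec j (x i) (x i) a a)) := by
          rw [← Finset.mul_sum]
  have hl' : (0:ℝ) < l := by exact_mod_cast hl
  have h2 : (0:ℝ) < (2:ℝ)^(n*l) := by positivity
  calc (1 / (l : ℝ)) * ((1 / (2 ^ (n * l) : ℝ)) *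
      ∑ σ : Fin l × Fin n → Bool,
        sSup {s : ℝ | ∃ h : ∀ j, H j,
          ((∑ j, ‖h j‖ ^ p) ^ (1 / p)) ≤ lam ∧
          s = ∑ i, ∑ a, radSign (σ (i, a)) * (∑ j, ⟪Ksec j (x i) a, h j⟫)})
      ≤ (1 / (l : ℝ)) * ((1 / (2 ^ (n * l) : ℝ)) *
        (lam * ((2:ℝ)^(n*l) * ∑ j, Real.sqrt (∑ i, ∑ a, kvec j (x i) (x i) a a)))) := by
        apply mul_le_mul_of_nonneg_left _ (by positivity)
        apply mul_le_mul_of_nonneg_left hmain (by positivity)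
    _ = (lam / l) * ∑ j, Real.sqrt (∑ i, ∑ a, kvec j (x i) (x i) a a) := by
        field_simp
end

section
/- For p = 1 (q = ∞) and a dictionary of m > 1 separable matrix-valued kernels k_i L with sup_x k_i(x,x) ≤ κ and tr(L) ≤ τ, the empirical Rademacher complexity of H_λ^1 satisfies R̂_l(H_λ^1) ≤ λ √(η₀ e ⌈2 ln m⌉ κ τ / l), where η₀ = 23/22, giving a √(log m) dependence on the number of kernels. -/
open scoped BigOperators RealInnerProductSpace
open Matrix

/-!
Write `w_j(σ) = ∑_{i,a} σ_{ia} K_j(x_i) e_a` for the signed sum of the sections of the `j`-th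
kernel. By duality between `ℓ¹` and `ℓ^∞`, the supremum over `∑_j ‖h_j‖ ≤ λ` at a sign pattern
`σ` is at most `λ · max_j ‖w_j(σ)‖`, so it suffices to bound the average of this maximum. We
control it through its `2q`-th moment: `max_j ‖w_j‖^{2q} ≤ ∑_j ‖w_j‖^{2q}`, and each term obeys
the Khintchine inequality `E ‖∑_p ε_p u_p‖^{2q} ≤ (2q-1)‼ (∑_p ‖u_p‖²)^q` in a Hilbert space. The
latter is proved by induction on the number of summands, averaging over the newest sign with
`‖v+u‖^{2q} + ‖v-u‖^{2q} ≤ (‖v‖+‖u‖)^{2q} + (‖v‖-‖u‖)^{2q}`. Separability turns the variance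
into `∑_a ‖K_j(x) e_a‖² = k_j(x,x) tr L ≤ κτ`. Jensen's inequality then bounds the average of
the maximum by `(m (2q-1)‼ (lκτ)^q)^{1/(2q)}`, and `q = ⌈r/2⌉` with `r = ⌈2 ln m⌉` gives
`m ≤ e^q` and `(2q-1)‼ ≤ r^q`; the factor `η₀ = 23/22` is slack.
-/

open Finset
open scoped Nat

namespace Nat

theorem two_pow_mul_factorial_mul_doubleFactorial (k : ℕ) :
    2 ^ k * k ! * (2 * k - 1)‼ = (2 * k)! := by
  cases k with
  | zero => rfl
  | succ k =>
    rw [← doubleFactorial_two_mul, show 2 * (k + 1) = (2 * k + 1) + 1 by ring,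
      factorial_eq_mul_doubleFactorial]
    rfl

theorem choose_mul_doubleFactorial_le {j k : ℕ} (hj : j ≤ k) :
    (2 * k).choose (2 * j) * (2 * (k - j) - 1)‼ ≤ (2 * k - 1)‼ * k.choose j := by
  have key : (2 * k).choose (2 * j) * (2 * (k - j) - 1)‼ * ((2 * j)! * (2 ^ (k - j) * (k - j)!))
      = (2 * k - 1)‼ * k.choose j * (2 ^ k * (j ! * (k - j)!)) := by
    have hpow : 2 ^ k = 2 ^ (k - j) * 2 ^ j := by rw [← pow_add, Nat.sub_add_cancel hj]
    have h2k : 2 * k - 2 * j = 2 * (k - j) := by omega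
    calc _ = (2 * k).choose (2 * j) * (2 * j)! * (2 * (k - j))! := by
          rw [← two_pow_mul_factorial_mul_doubleFactorial (k - j)]; ring
      _ = (2 * k)! := by rw [← h2k, choose_mul_factorial_mul_factorial (by omega)]
      _ = 2 ^ k * (k.choose j * j ! * (k - j)!) * (2 * k - 1)‼ := by
          rw [choose_mul_factorial_mul_factorial hj, two_pow_mul_factorial_mul_doubleFactorial]
      _ = _ := by ring
  have hle : 2 ^ k * (j ! * (k - j)!) ≤ (2 * j)! * (2 ^ (k - j) * (k - j)!) := by
    have hpow : 2 ^ k = 2 ^ j * 2 ^ (k - j) := by rw [← pow_add, Nat.add_sub_cancel' hj]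
    calc 2 ^ k * (j ! * (k - j)!) = (2 * j)‼ * (2 ^ (k - j) * (k - j)!) := by
          rw [hpow, doubleFactorial_two_mul]; ring
      _ ≤ _ := Nat.mul_le_mul_right _ (doubleFactorial_le_factorial _)
  refine Nat.le_of_mul_le_mul_right ?_ (by positivity : 0 < (2 * j)! * (2 ^ (k - j) * (k - j)!))
  exact key ▸ Nat.mul_le_mul_left _ hle

theorem doubleFactorial_two_mul_sub_one_le_pow (q : ℕ) : (2 * q - 1)‼ ≤ (2 * q - 1) ^ q := by
  induction q with
  | zero => rfl
  | succ q ih =>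
    rcases q.eq_zero_or_pos with rfl | hq
    · rfl
    rw [show 2 * (q + 1) - 1 = (2 * q - 1) + 2 by omega, doubleFactorial_add_two, pow_succ']
    exact Nat.mul_le_mul_left _ (ih.trans (Nat.pow_le_pow_left (by omega) q))

end Nat

theorem Finset.sum_range_two_mul_add_one {M : Type*} [AddCommMonoid M] (f : ℕ → M) (k : ℕ) :
    ∑ i ∈ range (2 * k + 1), f i
      = ∑ j ∈ range (k + 1), f (2 * j) + ∑ j ∈ range k, f (2 * j + 1) := by
  induction k with
  | zero => simp
  | succ k ih =>
    rw [show 2 * (k + 1) + 1 = 2 * k + 1 + 1 + 1 by ring, sum_range_succ, sum_range_succ, ih,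
      sum_range_succ (fun j => f (2 * j)) (k + 1), sum_range_succ (fun j => f (2 * j + 1)) k,
      show 2 * (k + 1) = 2 * k + 1 + 1 by ring]
    abel

theorem add_pow_add_sub_pow_two_mul (x a : ℝ) (k : ℕ) :
    (x + a) ^ (2 * k) + (x - a) ^ (2 * k)
      = 2 * ∑ j ∈ range (k + 1),
          ((2 * k).choose (2 * j) : ℝ) * a ^ (2 * j) * x ^ (2 * (k - j)) := by
  have hbinom : (x + a) ^ (2 * k) + (x - a) ^ (2 * k)
      = ∑ i ∈ range (2 * k + 1), (a ^ i + (-a) ^ i) * x ^ (2 * k - i) * ((2 * k).choose i : ℝ) := by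
    rw [add_comm x, sub_eq_neg_add, add_pow, add_pow, ← sum_add_distrib]
    exact sum_congr rfl fun i _ => by ring
  rw [hbinom, sum_range_two_mul_add_one, mul_sum]
  have hodd : ∀ j, a ^ (2 * j + 1) + (-a) ^ (2 * j + 1) = 0 := fun j => by
    rw [Odd.neg_pow ⟨j, rfl⟩]; ring
  simp only [hodd, zero_mul, sum_const_zero, add_zero]
  refine sum_congr rfl fun j hj => ?_
  rw [Even.neg_pow ⟨j, two_mul j⟩, show 2 * k - 2 * j = 2 * (k - j) by omega]
  ring

theorem pow_add_neg_pow_le {t t' : ℝ} (ht : |t| ≤ t') (i : ℕ) :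
    t ^ i + (-t) ^ i ≤ t' ^ i + (-t') ^ i := by
  rcases i.even_or_odd with hi | hi
  · rw [hi.neg_pow, hi.neg_pow, ← hi.pow_abs t]
    have hpow := pow_le_pow_left₀ (abs_nonneg t) ht i
    linarith
  · rw [hi.neg_pow, hi.neg_pow]; simp

theorem add_pow_add_sub_pow_le {A t t' : ℝ} (hA : 0 ≤ A) (ht : |t| ≤ t') (N : ℕ) :
    (A + t) ^ N + (A - t) ^ N ≤ (A + t') ^ N + (A - t') ^ N := by
  have hbinom : ∀ u : ℝ, (A + u) ^ N + (A - u) ^ N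
      = ∑ i ∈ range (N + 1), (u ^ i + (-u) ^ i) * (A ^ (N - i) * N.choose i) := fun u => by
    rw [add_comm A, sub_eq_neg_add, add_pow, add_pow, ← sum_add_distrib]
    exact sum_congr rfl fun i _ => by ring
  rw [hbinom, hbinom]
  exact sum_le_sum fun i _ => mul_le_mul_of_nonneg_right (pow_add_neg_pow_le ht i) (by positivity)

theorem norm_add_pow_add_norm_sub_pow_le {E : Type*} [NormedAddCommGroup E] [InnerProductSpace ℝ E]
    (v u : E) (k : ℕ) :
    ‖v + u‖ ^ (2 * k) + ‖v - u‖ ^ (2 * k) ≤ (‖v‖ + ‖u‖) ^ (2 * k) + (‖v‖ - ‖u‖) ^ (2 * k) := by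
  set S := ‖v‖ ^ 2 + ‖u‖ ^ 2
  calc ‖v + u‖ ^ (2 * k) + ‖v - u‖ ^ (2 * k) = (S + 2 * ⟪v, u⟫) ^ k + (S - 2 * ⟪v, u⟫) ^ k := by
        rw [pow_mul, pow_mul, norm_add_sq_real, norm_sub_sq_real]; ring
    _ ≤ (S + 2 * (‖v‖ * ‖u‖)) ^ k + (S - 2 * (‖v‖ * ‖u‖)) ^ k := by
        refine add_pow_add_sub_pow_le (by positivity) ?_ k
        rw [abs_mul, abs_two]
        exact mul_le_mul_of_nonneg_left (abs_real_inner_le_norm v u) zero_le_two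
    _ = (‖v‖ + ‖u‖) ^ (2 * k) + (‖v‖ - ‖u‖) ^ (2 * k) := by rw [pow_mul, pow_mul]; ring

theorem radSign_not (b : Bool) : radSign (!b) = -radSign b := by cases b <;> simp [radSign]

theorem norm_radSign_smul {E : Type*} [SeminormedAddCommGroup E] [NormedSpace ℝ E] (b : Bool)
    (u : E) : ‖radSign b • u‖ = ‖u‖ := by cases b <;> simp [radSign]

theorem sum_comp_update_not {α M : Type*} [Fintype α] [DecidableEq α] [AddCommMonoid M]
    (f : (α → Bool) → M) (a : α) : ∑ σ, f (Function.update σ a (!σ a)) = ∑ σ, f σ := by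
  have hinv : Function.Involutive fun σ : α → Bool => Function.update σ a (!σ a) := fun σ => by simp
  exact Equiv.sum_comp hinv.toPerm f

-- Adding an independent symmetric sign `±c` preserves even-moment bounds of Gaussian type,
-- with variance proxy `B` becoming `c ^ 2 + B`.
theorem sum_add_pow_add_sub_pow_le {Ω : Type*} [Fintype Ω] (f : Ω → ℝ) {A B : ℝ} (hA : 0 ≤ A)
    (hB : 0 ≤ B) (hf : ∀ k, ∑ ω, f ω ^ (2 * k) ≤ A * (2 * k - 1)‼ * B ^ k) (c : ℝ) (k : ℕ) :
    ∑ ω, ((f ω + c) ^ (2 * k) + (f ω - c) ^ (2 * k))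
      ≤ 2 * (A * (2 * k - 1)‼ * (c ^ 2 + B) ^ k) := by
  calc ∑ ω, ((f ω + c) ^ (2 * k) + (f ω - c) ^ (2 * k))
      = 2 * ∑ j ∈ range (k + 1),
          ((2 * k).choose (2 * j) : ℝ) * c ^ (2 * j) * ∑ ω, f ω ^ (2 * (k - j)) := by
        simp_rw [add_pow_add_sub_pow_two_mul, mul_sum]; rw [sum_comm]
    _ ≤ 2 * ∑ j ∈ range (k + 1), A * (2 * k - 1)‼ * ((c ^ 2) ^ j * B ^ (k - j) * k.choose j) := by
        gcongr 2 * ∑ j ∈ _, ?_ with j hj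
        have hcoeff :
            ((2 * k).choose (2 * j) * (2 * (k - j) - 1)‼ : ℝ) ≤ (2 * k - 1)‼ * k.choose j := by
          exact_mod_cast Nat.choose_mul_doubleFactorial_le (Nat.lt_succ_iff.mp (mem_range.mp hj))
        calc ((2 * k).choose (2 * j) : ℝ) * c ^ (2 * j) * ∑ ω, f ω ^ (2 * (k - j))
            ≤ (2 * k).choose (2 * j) * (c ^ 2) ^ j * (A * (2 * (k - j) - 1)‼ * B ^ (k - j)) := by
              rw [pow_mul]; exact mul_le_mul_of_nonneg_left (hf _) (by positivity)
          _ = ((2 * k).choose (2 * j) * (2 * (k - j) - 1)‼ : ℝ)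
                * (A * (c ^ 2) ^ j * B ^ (k - j)) := by ring
          _ ≤ ((2 * k - 1)‼ * k.choose j : ℝ) * (A * (c ^ 2) ^ j * B ^ (k - j)) := by gcongr
          _ = A * (2 * k - 1)‼ * ((c ^ 2) ^ j * B ^ (k - j) * k.choose j) := by ring
    _ = 2 * (A * (2 * k - 1)‼ * (c ^ 2 + B) ^ k) := by rw [add_pow, ← mul_sum]

-- Khintchine's inequality for even moments (at `k = 0`, `2 * 0 - 1 = 0` and `0‼ = 1`).
theorem sum_norm_sum_radSign_smul_pow_le {E : Type*} [NormedAddCommGroup E] [InnerProductSpace ℝ E]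
    {α : Type*} [Fintype α] [DecidableEq α] (u : α → E) (s : Finset α) (k : ℕ) :
    ∑ σ : α → Bool, ‖∑ p ∈ s, radSign (σ p) • u p‖ ^ (2 * k)
      ≤ 2 ^ Fintype.card α * (2 * k - 1)‼ * (∑ p ∈ s, ‖u p‖ ^ 2) ^ k := by
  induction s using Finset.cons_induction generalizing k with
  | empty => cases k <;> simp
  | cons a s ha ih =>
    set T : (α → Bool) → E := fun σ => ∑ p ∈ s, radSign (σ p) • u p
    set g : (α → Bool) → ℝ := fun σ => ‖∑ p ∈ cons a s ha, radSign (σ p) • u p‖ ^ (2 * k)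
    have hpair : ∀ σ, g σ + g (Function.update σ a (!σ a))
        ≤ (‖T σ‖ + ‖u a‖) ^ (2 * k) + (‖T σ‖ - ‖u a‖) ^ (2 * k) := fun σ => by
      have hT : ∑ p ∈ s, radSign (Function.update σ a (!σ a) p) • u p = T σ :=
        sum_congr rfl fun p hp => by rw [Function.update_of_ne (ne_of_mem_of_not_mem hp ha)]
      simp only [g, sum_cons, Function.update_self, radSign_not, neg_smul, hT]
      rw [← norm_radSign_smul (σ a) (u a), add_comm (radSign (σ a) • u a), neg_add_eq_sub]
      exact norm_add_pow_add_norm_sub_pow_le (T σ) _ k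
    have hstep := sum_add_pow_add_sub_pow_le (fun σ => ‖T σ‖) (by positivity)
      (sum_nonneg fun p _ => by positivity) ih ‖u a‖ k
    have hsum := sum_le_sum fun σ (_ : σ ∈ univ) => hpair σ
    rw [sum_add_distrib, sum_comp_update_not g a] at hsum
    rw [sum_cons]
    linarith

theorem sum_inner_le_sup'_norm_mul_sum_norm {ι : Type*} [Fintype ι] [Nonempty ι] {H : ι → Type*}
    [∀ j, NormedAddCommGroup (H j)] [∀ j, InnerProductSpace ℝ (H j)] (v h : ∀ j, H j) :
    ∑ j, ⟪v j, h j⟫ ≤ univ.sup' univ_nonempty (fun j => ‖v j‖) * ∑ j, ‖h j‖ := by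
  rw [mul_sum]
  refine sum_le_sum fun j _ => (real_inner_le_norm _ _).trans ?_
  exact mul_le_mul_of_nonneg_right (le_sup' (fun j => ‖v j‖) (mem_univ j)) (norm_nonneg _)

theorem sum_sup'_pow_le_sum_sum_pow {ι Ω : Type*} [Fintype ι] [Nonempty ι] [Fintype Ω]
    (f : ι → Ω → ℝ) (hf : ∀ j ω, 0 ≤ f j ω) (N : ℕ) :
    ∑ ω, (univ.sup' univ_nonempty fun j => f j ω) ^ N ≤ ∑ j, ∑ ω, f j ω ^ N := by
  rw [sum_comm]
  refine sum_le_sum fun ω _ => ?_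
  obtain ⟨j, -, hj⟩ := exists_mem_eq_sup' univ_nonempty fun j => f j ω
  rw [hj]
  exact single_le_sum (f := fun j => f j ω ^ N) (fun j _ => pow_nonneg (hf j ω) N) (mem_univ j)

theorem sum_le_card_mul_sqrt_of_sum_pow_le {ι : Type*} {s : Finset ι} {f : ι → ℝ}
    (hf : ∀ i ∈ s, 0 ≤ f i) {C : ℝ} (hC : 0 ≤ C) {q : ℕ} (hq : q ≠ 0)
    (h : ∑ i ∈ s, f i ^ (2 * q) ≤ #s * C ^ q) : ∑ i ∈ s, f i ≤ #s * √C := by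
  obtain ⟨p, rfl⟩ := Nat.exists_eq_succ_of_ne_zero hq
  refine le_of_pow_le_pow_left₀ (by omega : 2 * (p + 1) ≠ 0) (by positivity) ?_
  calc (∑ i ∈ s, f i) ^ (2 * (p + 1)) ≤ (#s : ℝ) ^ (2 * p + 1) * ∑ i ∈ s, f i ^ (2 * (p + 1)) :=
        pow_sum_le_card_mul_sum_pow hf _
    _ ≤ (#s : ℝ) ^ (2 * p + 1) * (#s * C ^ (p + 1)) := by gcongr
    _ = (#s * √C) ^ (2 * (p + 1)) := by
        rw [mul_pow, pow_mul √C, Real.sq_sqrt hC]; ring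

theorem natCast_mul_doubleFactorial_le {m r : ℕ} (hm : 0 < m) (hr : 2 * Real.log m ≤ r) :
    (m : ℝ) * (2 * ((r + 1) / 2) - 1)‼ ≤ (Real.exp 1 * r) ^ ((r + 1) / 2) := by
  set q := (r + 1) / 2
  have hm_le : (m : ℝ) ≤ Real.exp 1 ^ q := by
    have hq : (r : ℝ) ≤ 2 * q := by exact_mod_cast (by omega : r ≤ 2 * q)
    calc (m : ℝ) = Real.exp (Real.log m) := (Real.exp_log (by positivity)).symm
      _ ≤ Real.exp q := Real.exp_le_exp.mpr (by linarith)
      _ = Real.exp 1 ^ q := by rw [← Real.exp_nat_mul, mul_one]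
  have hdf : ((2 * q - 1)‼ : ℝ) ≤ (r : ℝ) ^ q := by
    exact_mod_cast (Nat.doubleFactorial_two_mul_sub_one_le_pow q).trans
      (Nat.pow_le_pow_left (by omega) q)
  rw [mul_pow]
  exact mul_le_mul hm_le hdf (by positivity) (by positivity)

section SeparableKernel

variable {X : Type*} {n m : ℕ} {H : Fin m → Type*} [∀ j, NormedAddCommGroup (H j)]
  [∀ j, InnerProductSpace ℝ (H j)] {Ksec : ∀ j, X → Fin n → H j} {k : Fin m → X → X → ℝ}
  {L : Matrix (Fin n) (Fin n) ℝ} {κ τ : ℝ}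

theorem sum_norm_sq_sections_eq (hker : ∀ j x z a b, k j x z * L a b = ⟪Ksec j x a, Ksec j z b⟫)
    (j : Fin m) (x : X) : ∑ a, ‖Ksec j x a‖ ^ 2 = k j x x * L.trace := by
  simp_rw [← real_inner_self_eq_norm_sq, ← hker, Matrix.trace, Matrix.diag, mul_sum]

theorem sections_eq_zero_of_neg (hL : L.PosSemidef)
    (hker : ∀ j x z a b, k j x z * L a b = ⟪Ksec j x a, Ksec j z b⟫)
    (hκ : ∀ j x, k j x x ≤ κ) (hκ0 : κ < 0) (j : Fin m) (x : X) (a : Fin n) : Ksec j x a = 0 := by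
  rw [← norm_eq_zero, ← sq_nonpos_iff, ← real_inner_self_eq_norm_sq, ← hker]
  exact mul_nonpos_of_nonpos_of_nonneg ((hκ j x).trans hκ0.le) hL.diag_nonneg

theorem sum_norm_sq_sections_le (hL : L.PosSemidef)
    (hker : ∀ j x z a b, k j x z * L a b = ⟪Ksec j x a, Ksec j z b⟫)
    (hκ : ∀ j x, k j x x ≤ κ) (hτ : L.trace ≤ τ) (hκ0 : 0 ≤ κ) {l : ℕ} (x : Fin l → X) (j : Fin m) :
    ∑ p : Fin l × Fin n, ‖Ksec j (x p.1) p.2‖ ^ 2 ≤ l * (κ * τ) := by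
  rw [Fintype.sum_prod_type]
  simp_rw [sum_norm_sq_sections_eq hker]
  calc ∑ i, k j (x i) (x i) * L.trace ≤ ∑ _i : Fin l, κ * τ :=
        sum_le_sum fun i _ => mul_le_mul (hκ j _) hτ hL.trace_nonneg hκ0
    _ = l * (κ * τ) := by simp

variable {l : ℕ}

def signedSectionSum (Ksec : ∀ j, X → Fin n → H j) (x : Fin l → X) (σ : Fin l × Fin n → Bool)
    (j : Fin m) : H j :=
  ∑ p, radSign (σ p) • Ksec j (x p.1) p.2

theorem sum_radSign_mul_sum_inner_eq (x : Fin l → X) (σ : Fin l × Fin n → Bool) (h : ∀ j, H j) :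
    ∑ i, ∑ a, radSign (σ (i, a)) * ∑ j, ⟪Ksec j (x i) a, h j⟫
      = ∑ j, ⟪signedSectionSum Ksec x σ j, h j⟫ := by
  simp_rw [signedSectionSum, sum_inner, real_inner_smul_left, mul_sum]
  simp_rw [Fintype.sum_prod_type]
  conv_rhs => rw [sum_comm]
  exact sum_congr rfl fun _ _ => sum_comm

def maxNormSignedSectionSum [Nonempty (Fin m)] (Ksec : ∀ j, X → Fin n → H j) (x : Fin l → X)
    (σ : Fin l × Fin n → Bool) : ℝ :=
  univ.sup' univ_nonempty fun j => ‖signedSectionSum Ksec x σ j‖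

theorem maxNormSignedSectionSum_nonneg [Nonempty (Fin m)] (x : Fin l → X)
    (σ : Fin l × Fin n → Bool) : 0 ≤ maxNormSignedSectionSum Ksec x σ :=
  le_sup'_of_le _ (mem_univ (Classical.arbitrary _)) (norm_nonneg _)

theorem sSup_sum_radSign_mul_sum_inner_le [Nonempty (Fin m)] {lam : ℝ} (hlam : 0 ≤ lam)
    (x : Fin l → X) (σ : Fin l × Fin n → Bool) :
    sSup {s : ℝ | ∃ h : ∀ j, H j, (∑ j, ‖h j‖) ≤ lam ∧
        s = ∑ i, ∑ a, radSign (σ (i, a)) * (∑ j, ⟪Ksec j (x i) a, h j⟫)}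
      ≤ lam * maxNormSignedSectionSum Ksec x σ := by
  have hM := maxNormSignedSectionSum_nonneg (Ksec := Ksec) x σ
  refine Real.sSup_le ?_ (mul_nonneg hlam hM)
  rintro _ ⟨h, hh, rfl⟩
  rw [sum_radSign_mul_sum_inner_eq, mul_comm lam]
  exact (sum_inner_le_sup'_norm_mul_sum_norm _ h).trans (mul_le_mul_of_nonneg_left hh hM)

theorem sum_maxNormSignedSectionSum_pow_le [Nonempty (Fin m)] (hL : L.PosSemidef)
    (hker : ∀ j x z a b, k j x z * L a b = ⟪Ksec j x a, Ksec j z b⟫)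
    (hκ : ∀ j x, k j x x ≤ κ) (hτ : L.trace ≤ τ) (hκ0 : 0 ≤ κ) (x : Fin l → X) (q : ℕ) :
    ∑ σ, maxNormSignedSectionSum Ksec x σ ^ (2 * q)
      ≤ 2 ^ (l * n) * (m * (2 * q - 1)‼) * (l * (κ * τ)) ^ q := by
  calc _ ≤ ∑ j, ∑ σ, ‖signedSectionSum Ksec x σ j‖ ^ (2 * q) :=
        sum_sup'_pow_le_sum_sum_pow _ (fun _ _ => norm_nonneg _) _
    _ ≤ ∑ _j : Fin m, 2 ^ (l * n) * (2 * q - 1)‼ * (l * (κ * τ)) ^ q := by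
        refine sum_le_sum fun j _ => ?_
        refine (sum_norm_sum_radSign_smul_pow_le
          (fun p : Fin l × Fin n => Ksec j (x p.1) p.2) univ q).trans ?_
        rw [Fintype.card_prod, Fintype.card_fin, Fintype.card_fin]
        gcongr
        exact sum_norm_sq_sections_le hL hker hκ hτ hκ0 x j
    _ = _ := by simp; ring

theorem sum_maxNormSignedSectionSum_le [Nonempty (Fin m)] (hm : 1 < m) (hL : L.PosSemidef)
    (hker : ∀ j x z a b, k j x z * L a b = ⟪Ksec j x a, Ksec j z b⟫)
    (hκ : ∀ j x, k j x x ≤ κ) (hτ : L.trace ≤ τ) (hκ0 : 0 ≤ κ) (x : Fin l → X) :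
    ∑ σ, maxNormSignedSectionSum Ksec x σ
      ≤ 2 ^ (l * n) * √(Real.exp 1 * ⌈2 * Real.log m⌉₊ * (l * (κ * τ))) := by
  set r := ⌈2 * Real.log m⌉₊
  have hq : (r + 1) / 2 ≠ 0 := by
    have : 0 < r := Nat.ceil_pos.mpr (mul_pos two_pos (Real.log_pos (by exact_mod_cast hm)))
    omega
  have hτ0 : 0 ≤ τ := hL.trace_nonneg.trans hτ
  have hcard : (#(univ : Finset (Fin l × Fin n → Bool)) : ℝ) = 2 ^ (l * n) := by simp
  rw [← hcard]
  refine sum_le_card_mul_sqrt_of_sum_pow_le (fun σ _ => maxNormSignedSectionSum_nonneg x σ)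
    (by positivity) hq ?_
  refine (sum_maxNormSignedSectionSum_pow_le hL hker hκ hτ hκ0 x _).trans ?_
  rw [hcard, mul_pow (Real.exp 1 * r), mul_assoc]
  gcongr
  exact natCast_mul_doubleFactorial_le (by omega : 0 < m) (Nat.le_ceil _)

end SeparableKernel

theorem rademacher_bound_separable_l1
    {X : Type*} {n m l : ℕ} (hl : 0 < l) (hm : 1 < m)
    (H : Fin m → Type) [∀ j, NormedAddCommGroup (H j)] [∀ j, InnerProductSpace ℝ (H j)]
    (Ksec : ∀ j, X → Fin n → H j)
    (k : Fin m → X → X → ℝ) (L : Matrix (Fin n) (Fin n) ℝ) (hL : L.PosSemidef)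
    (hker : ∀ j x z a b, k j x z * L a b = ⟪Ksec j x a, Ksec j z b⟫)
    (κ τ : ℝ) (hκ : ∀ j x', k j x' x' ≤ κ) (hτ : L.trace ≤ τ)
    (lam : ℝ) (hlam : 0 ≤ lam)
    (x : Fin l → X) :
    (1 / (l : ℝ)) * ((1 / (2 ^ (n * l) : ℝ)) *
      ∑ σ : Fin l × Fin n → Bool,
        sSup {s : ℝ | ∃ h : ∀ j, H j,
          (∑ j, ‖h j‖) ≤ lam ∧
          s = ∑ i, ∑ a, radSign (σ (i, a)) * (∑ j, ⟪Ksec j (x i) a, h j⟫)})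
    ≤ lam * Real.sqrt ((23 / 22) * Real.exp 1 *
        (⌈2 * Real.log m⌉₊ : ℝ) * κ * τ / l) := by
  have : Nonempty (Fin m) := ⟨⟨0, by omega⟩⟩
  set Q := 23 / 22 * Real.exp 1 * ⌈2 * Real.log m⌉₊ * κ * τ with hQ
  have hM : ∑ σ, maxNormSignedSectionSum Ksec x σ ≤ 2 ^ (n * l) * √(Q * l) := by
    rcases lt_or_ge κ 0 with hκ0 | hκ0
    · simp [maxNormSignedSectionSum, signedSectionSum, sections_eq_zero_of_neg hL hker hκ hκ0]
      positivity
    have hτ0 : 0 ≤ τ := hL.trace_nonneg.trans hτ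
    refine (sum_maxNormSignedSectionSum_le hm hL hker hκ hτ hκ0 x).trans ?_
    rw [mul_comm n l, hQ]
    refine mul_le_mul_of_nonneg_left (Real.sqrt_le_sqrt ?_) (by positivity)
    nlinarith [show 0 ≤ Real.exp 1 * ⌈2 * Real.log m⌉₊ * (l * (κ * τ)) by positivity]
  have hl0 : (0 : ℝ) < l := by exact_mod_cast hl
  calc _ ≤ 1 / (l : ℝ) * (1 / 2 ^ (n * l) * (lam * ∑ σ, maxNormSignedSectionSum Ksec x σ)) := by
        gcongr
        rw [mul_sum]
        exact sum_le_sum fun σ _ => sSup_sum_radSign_mul_sum_inner_le hlam x σ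
    _ ≤ 1 / (l : ℝ) * (1 / 2 ^ (n * l) * (lam * (2 ^ (n * l) * √(Q * l)))) := by gcongr
    _ = lam * √(Q / l) := by
        rw [Real.sqrt_mul' _ hl0.le, Real.sqrt_div' _ hl0.le]
        field_simp
        rw [Real.sq_sqrt hl0.le]; ring
end
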